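/- arXiv:2403.00666 — 2 statements merged into one kernel-verified Lean document; each statement's English description precedes it below -/
import Mathlib

section
/- Let (T,ρ_T) and (Z,ρ_Z) be metric spaces and define the metric ρ_T × ρ_Z on T × Z by (ρ_T × ρ_Z)((t₁,z₁),(t₂,z₂)) = ρ_T(t₁,t₂) + ρ_Z(z₁,z₂). Then γ₂(T × Z, ρ_T × ρ_Z) ≤ 3γ₂(T,ρ_T) + 3γ₂(Z,ρ_Z). -/
open MeasureTheory ProbabilityTheory
open scoped ENNReal NNReal RealInnerProductSpace

noncomputable section

/-- `N₀ = 1`, `N_k = 2^(2^k)` for `k ≥ 1`. -/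
def Nk (k : ℕ) : ℕ := if k = 0 then 1 else 2 ^ 2 ^ k

/-- Talagrand's `γ₂` functional of a space `T` with distance function `ρ`. -/
def gamma2 {T : Type*} (ρ : T → T → ℝ) : ℝ≥0∞ :=
  ⨅ A ∈ {A : ℕ → Set T | ∀ k, (A k).Nonempty ∧ (A k).Finite ∧ (A k).ncard ≤ Nk k},
    ⨆ t : T, ∑' k : ℕ, ENNReal.ofReal ((2 : ℝ) ^ ((k : ℝ) / 2) * sInf ((fun s => ρ t s) '' A k))

/-! Given admissible sequences `(Aₖ)` for `T` and `(Bₖ)` for `Z`, the sequence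
`C₀ = A₀ × B₀`, `Cₖ = Aₖ₋₁ × Bₖ₋₁` is admissible for `T × Z`, because `N_{k-1}² ≤ N_k`.
The distance from `(t, z)` to `Cₖ` is the sum of the distances from `t` to `Aₖ₋₁` and from `z`
to `Bₖ₋₁`, and delaying a sequence by one step costs at most a factor 3 in the chaining sum
`∑ₖ 2^{k/2} aₖ`: the first term is unchanged and every later weight grows by `√2 ≤ 2`. -/

open Set

lemma Nk_pred_mul_self_le (k : ℕ) : Nk (k - 1) * Nk (k - 1) ≤ Nk k := by
  match k with
  | 0 | 1 => simp [Nk]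
  | j + 2 =>
    show Nk (j + 1) * Nk (j + 1) ≤ Nk (j + 2)
    rw [Nk, Nk, if_neg j.succ_ne_zero, if_neg (j + 1).succ_ne_zero, ← pow_add, ← two_mul,
      ← pow_succ']

lemma csInf_image_prod_add {α β M : Type*} [ConditionallyCompleteLattice M] [AddGroup M]
    [AddLeftMono M] [AddRightMono M] {f : α → M} {g : β → M} {s : Set α} {t : Set β}
    (hs : s.Nonempty) (hf : BddBelow (f '' s)) (ht : t.Nonempty) (hg : BddBelow (g '' t)) :
    sInf ((fun p => f p.1 + g p.2) '' s ×ˢ t) = sInf (f '' s) + sInf (g '' t) := by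
  rw [← csInf_add (hs.image f) hf (ht.image g) hg, ← image2_add, image2_image_left,
    image2_image_right, ← image_prod]

def chainSum (a : ℕ → ℝ) : ℝ≥0∞ :=
  ∑' k : ℕ, ENNReal.ofReal ((2 : ℝ) ^ ((k : ℝ) / 2) * a k)

lemma chainSum_add_le (a b : ℕ → ℝ) : chainSum (a + b) ≤ chainSum a + chainSum b := by
  simp only [chainSum, ← ENNReal.tsum_add]
  refine ENNReal.tsum_le_tsum fun k => ?_
  rw [Pi.add_apply, mul_add]
  exact ENNReal.ofReal_add_le

lemma rpow_succ_div_two_le (k : ℕ) :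
    (2 : ℝ) ^ (((k + 1 : ℕ) : ℝ) / 2) ≤ 2 * (2 : ℝ) ^ ((k : ℝ) / 2) := by
  have hsqrt : (2 : ℝ) ^ ((1 : ℝ) / 2) ≤ 2 :=
    (Real.rpow_le_rpow_of_exponent_le one_le_two (by norm_num)).trans_eq (Real.rpow_one 2)
  calc (2 : ℝ) ^ (((k + 1 : ℕ) : ℝ) / 2) = (2 : ℝ) ^ ((1 : ℝ) / 2) * (2 : ℝ) ^ ((k : ℝ) / 2) := by
        rw [← Real.rpow_add two_pos]; push_cast; ring_nf
    _ ≤ 2 * (2 : ℝ) ^ ((k : ℝ) / 2) := by gcongr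

lemma chainSum_shift_le (a : ℕ → ℝ) : (chainSum fun k => a (k - 1)) ≤ 3 * chainSum a := by
  have hterm (k : ℕ) : ENNReal.ofReal ((2 : ℝ) ^ (((k + 1 : ℕ) : ℝ) / 2) * a k)
      ≤ 2 * ENNReal.ofReal ((2 : ℝ) ^ ((k : ℝ) / 2) * a k) := by
    rw [ENNReal.ofReal_mul (by positivity), ENNReal.ofReal_mul (by positivity), ← mul_assoc,
      ← ENNReal.ofReal_ofNat 2, ← ENNReal.ofReal_mul zero_le_two]
    gcongr
    exact rpow_succ_div_two_le k
  have hhead : ENNReal.ofReal ((2 : ℝ) ^ (((0 : ℕ) : ℝ) / 2) * a 0) ≤ chainSum a :=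
    ENNReal.le_tsum (f := fun k : ℕ => ENNReal.ofReal ((2 : ℝ) ^ ((k : ℝ) / 2) * a k)) 0
  calc (chainSum fun k => a (k - 1))
      = ENNReal.ofReal ((2 : ℝ) ^ (((0 : ℕ) : ℝ) / 2) * a 0)
          + ∑' k : ℕ, ENNReal.ofReal ((2 : ℝ) ^ (((k + 1 : ℕ) : ℝ) / 2) * a k) :=
        tsum_eq_zero_add' ENNReal.summable
    _ ≤ chainSum a + 2 * chainSum a := by
        refine add_le_add hhead ?_
        rw [chainSum, ← ENNReal.tsum_mul_left]
        exact ENNReal.tsum_le_tsum hterm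
    _ = 3 * chainSum a := by ring

section Admissible

variable {T : Type*}

def IsAdmissible (A : ℕ → Set T) : Prop :=
  ∀ k, (A k).Nonempty ∧ (A k).Finite ∧ (A k).ncard ≤ Nk k

lemma gamma2_eq_iInf (ρ : T → T → ℝ) :
    gamma2 ρ = ⨅ A, ⨅ _ : IsAdmissible A, ⨆ t, chainSum fun k => sInf ((fun s => ρ t s) '' A k) :=
  rfl

lemma gamma2_le_iSup_chainSum (ρ : T → T → ℝ) {A : ℕ → Set T} (hA : IsAdmissible A) :
    gamma2 ρ ≤ ⨆ t, chainSum fun k => sInf ((fun s => ρ t s) '' A k) :=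
  iInf₂_le A hA

lemma IsAdmissible.prod_pred {Z : Type*} {A : ℕ → Set T} {B : ℕ → Set Z} (hA : IsAdmissible A)
    (hB : IsAdmissible B) : IsAdmissible fun k => A (k - 1) ×ˢ B (k - 1) := by
  intro k
  obtain ⟨hAne, hAfin, hAcard⟩ := hA (k - 1)
  obtain ⟨hBne, hBfin, hBcard⟩ := hB (k - 1)
  refine ⟨hAne.prod hBne, hAfin.prod hBfin, ?_⟩
  rw [ncard_prod]
  exact (Nat.mul_le_mul hAcard hBcard).trans (Nk_pred_mul_self_le k)

end Admissible

lemma gamma2_prod_le_of_isAdmissible {T Z : Type*} [MetricSpace T] [MetricSpace Z]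
    {A : ℕ → Set T} {B : ℕ → Set Z} (hA : IsAdmissible A) (hB : IsAdmissible B) :
    gamma2 (fun p q : T × Z => dist p.1 q.1 + dist p.2 q.2)
      ≤ 3 * (⨆ t, chainSum fun k => sInf ((fun s => dist t s) '' A k))
        + 3 * ⨆ z, chainSum fun k => sInf ((fun s => dist z s) '' B k) := by
  refine (gamma2_le_iSup_chainSum _ (hA.prod_pred hB)).trans (iSup_le fun ⟨t, z⟩ => ?_)
  set a := fun k => sInf ((fun s => dist t s) '' A k)
  set b := fun k => sInf ((fun s => dist z s) '' B k)
  have hdist (k : ℕ) : sInf ((fun s : T × Z => dist t s.1 + dist z s.2) '' A (k - 1) ×ˢ B (k - 1))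
      = a (k - 1) + b (k - 1) :=
    csInf_image_prod_add (hA _).1 ((hA _).2.1.image _).bddBelow (hB _).1
      ((hB _).2.1.image _).bddBelow
  calc (chainSum fun k =>
        sInf ((fun s : T × Z => dist t s.1 + dist z s.2) '' A (k - 1) ×ˢ B (k - 1)))
      = chainSum ((fun k => a (k - 1)) + fun k => b (k - 1)) := by simp_rw [hdist]; rfl
    _ ≤ 3 * chainSum a + 3 * chainSum b :=
        (chainSum_add_le _ _).trans (add_le_add (chainSum_shift_le a) (chainSum_shift_le b))
    _ ≤ _ := by gcongr <;> exact le_iSup (fun x => chainSum _) _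

/-- Subadditivity (up to a factor 3) of Talagrand's `γ₂` functional under the sum metric on a
product of two metric spaces (Lemma 2.1 of the paper). -/
theorem gamma2_prod_le {T Z : Type*} [MetricSpace T] [MetricSpace Z] :
    gamma2 (fun p q : T × Z => dist p.1 q.1 + dist p.2 q.2)
      ≤ 3 * gamma2 (fun a b : T => dist a b) + 3 * gamma2 (fun a b : Z => dist a b) := by
  simp only [gamma2_eq_iInf (fun a b : T => dist a b), gamma2_eq_iInf (fun a b : Z => dist a b),
    ENNReal.mul_iInf_of_ne three_ne_zero ENNReal.ofNat_ne_top, ENNReal.iInf_add, ENNReal.add_iInf,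
    le_iInf_iff]
  exact fun B hB A hA => gamma2_prod_le_of_isAdmissible hA hB

end
end

section
/- Let a > 0 and s ∈ ℕ, and let D be the set of all functions h : [−a,a]^s → ℝ that are 1-Lipschitz (with respect to the Euclidean norm on ℝ^s) and satisfy h(0) = 0, equipped with the supremum norm ‖h‖_∞ = sup_{x∈[−a,a]^s} |h(x)|. Then for every ε > 0, the covering number satisfies N(D, ‖·‖_∞, ε) ≤ exp((C a √s / ε)^s), where C ≥ 1 is a universal constant. -/
/-!
Quantize a function at scale `ε / 3` on a grid of mesh `ε / (3 √s)` in the cube, and join the grid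
points into a tree rooted at the origin by moving a point one step towards the origin in every
nonzero coordinate. Along an edge the quantized values of a 1-Lipschitz function change by
`-1`, `0` or `1`, and at the root they vanish, so recording these increments determines the
function up to `ε` with one of `3 ^ (number of grid points)` codes. When `ε < a √s` the grid has
at most `(9 a √s / ε) ^ s` points. Recording increments rather than values is what keeps a
factor `log (a √s / ε)` out of the exponent.
-/

open MeasureTheory ProbabilityTheory
open scoped ENNReal NNReal RealInnerProductSpace

noncomputable section

/-- The covering number of a space `T` with distance function `ρ` at scale `ε`,
as an extended nonnegative real. -/
def coverN {T : Type*} (ρ : T → T → ℝ) (ε : ℝ) : ℝ≥0∞ :=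
  ⨅ S ∈ {S : Set T | S.Finite ∧ ∀ t, ∃ s ∈ S, ρ t s ≤ ε}, (S.ncard : ℝ≥0∞)

/-- The cube `[-a,a]^s` in `ℝ^s`. -/
def cube (s : ℕ) (a : ℝ) : Set (EuclideanSpace ℝ (Fin s)) := {x | ∀ i, |x i| ≤ a}

section CoveringNumber

variable {T : Type*} {ρ : T → T → ℝ} {ε : ℝ}

lemma coverN_le_ncard {S : Set T} (hS : S.Finite) (hcover : ∀ t, ∃ s ∈ S, ρ t s ≤ ε) :
    coverN ρ ε ≤ S.ncard :=
  iInf₂_le S ⟨hS, hcover⟩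

lemma coverN_le_one (t₀ : T) (h : ∀ t, ρ t t₀ ≤ ε) : coverN ρ ε ≤ 1 := by
  simpa using coverN_le_ncard (Set.finite_singleton t₀) fun t => ⟨t₀, rfl, h t⟩

lemma coverN_le_card_of_encode {β : Type*} (F : Finset β) (e : T → β) (he : ∀ t, e t ∈ F)
    (hfiber : ∀ t t', e t = e t' → ρ t t' ≤ ε) : coverN ρ ε ≤ F.card := by
  rcases isEmpty_or_nonempty T with hT | hT
  · exact (coverN_le_ncard (S := ∅) Set.finite_empty isEmptyElim).trans (by simp)
  refine (coverN_le_ncard (F.finite_toSet.image (Function.invFun e)) fun t =>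
    ⟨Function.invFun e (e t), Set.mem_image_of_mem _ (he t),
      hfiber _ _ (Function.invFun_eq ⟨t, rfl⟩).symm⟩).trans ?_
  exact_mod_cast (Set.ncard_image_le F.finite_toSet).trans (Set.ncard_coe_finset F).le

end CoveringNumber

lemma Int.abs_floor_sub_floor_le_one {R : Type*} [CommRing R] [LinearOrder R]
    [IsStrictOrderedRing R] [FloorRing R] {x y : R} (h : |x - y| ≤ 1) : |⌊x⌋ - ⌊y⌋| ≤ 1 := by
  obtain ⟨hlo, hhi⟩ := abs_le.mp h
  have h₁ : ((⌊x⌋ - ⌊y⌋ : ℤ) : R) < 2 := by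
    push_cast; linarith [Int.floor_le x, Int.lt_floor_add_one y]
  have h₂ : ((⌊y⌋ - ⌊x⌋ : ℤ) : R) < 2 := by
    push_cast; linarith [Int.floor_le y, Int.lt_floor_add_one x]
  have h₁ : ⌊x⌋ - ⌊y⌋ < 2 := mod_cast h₁
  have h₂ : ⌊y⌋ - ⌊x⌋ < 2 := mod_cast h₂
  rw [abs_le]
  constructor <;> omega

lemma eq_of_sub_comp_eq {ι G : Type*} [AddGroup G] {p : ι → ι} {r : ι}
    (hreach : ∀ k, ∃ n, p^[n] k = r) {u v : ι → G} (hr : u r = v r)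
    (h : u - u ∘ p = v - v ∘ p) : u = v := by
  have key : ∀ n k, p^[n] k = r → u k = v k := by
    intro n
    induction n with
    | zero => rintro k rfl; exact hr
    | succ n ih =>
      intro k hk
      have hpk := ih (p k) (by rwa [← Function.iterate_succ_apply])
      have := congrFun h k
      simp only [Pi.sub_apply, Function.comp_apply, hpk] at this
      exact sub_left_inj.mp this
  funext k
  obtain ⟨n, hn⟩ := hreach k
  exact key n k hn

/-- A `δ`-net of `X` whose points form a tree rooted at `root`, with edges of length at most `δ`. -/
structure RootedNet (X : Type*) [PseudoMetricSpace X] (ι : Type*) (δ : ℝ) where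
  point : ι → X
  parent : ι → ι
  root : ι
  exists_iterate_parent_eq_root : ∀ k, ∃ n, parent^[n] k = root
  dist_parent_le : ∀ k, dist (point k) (point (parent k)) ≤ δ
  exists_dist_le : ∀ x, ∃ k, dist x (point k) ≤ δ

namespace RootedNet

variable {X ι : Type*} [PseudoMetricSpace X] {δ : ℝ}

theorem coverN_lipschitz_le [Fintype ι] (N : RootedNet X ι δ) (hδ : 0 < δ) {T : Type*}
    (f : T → X → ℝ) (hf : ∀ t, LipschitzWith 1 (f t)) (hroot : ∀ t, f t (N.point N.root) = 0)
    {ε : ℝ} (hε : 3 * δ ≤ ε) :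
    coverN (fun t t' => ⨆ x, |f t x - f t' x|) ε ≤ 3 ^ Fintype.card ι := by
  classical
  have : Nonempty X := ⟨N.point N.root⟩
  have hlip : ∀ t x y, |f t x - f t y| ≤ dist x y := fun t x y => by
    simpa [Real.dist_eq] using (hf t).dist_le_mul x y
  have hscale : ∀ u v : ℝ, |u / δ - v / δ| = |u - v| / δ := fun u v => by
    rw [← sub_div, abs_div, abs_of_pos hδ]
  let q : T → ι → ℤ := fun t k => ⌊f t (N.point k) / δ⌋
  refine (coverN_le_card_of_encode (Fintype.piFinset fun _ : ι => Finset.Icc (-1 : ℤ) 1)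
    (fun t => q t - q t ∘ N.parent) (fun t => ?_) (fun t t' hcode => ?_)).trans ?_
  · refine Fintype.mem_piFinset.mpr fun k => Finset.mem_Icc.mpr (abs_le.mp ?_)
    refine Int.abs_floor_sub_floor_le_one ?_
    rw [hscale, div_le_one hδ]
    exact (hlip t _ _).trans (N.dist_parent_le k)
  · have hq : q t = q t' := eq_of_sub_comp_eq N.exists_iterate_parent_eq_root
      (by simp [q, hroot]) hcode
    refine ciSup_le fun x => ?_
    obtain ⟨k, hk⟩ := N.exists_dist_le x
    have hk' : |f t (N.point k) - f t' (N.point k)| < δ := by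
      have := Int.abs_sub_lt_one_of_floor_eq_floor (congrFun hq k)
      rwa [hscale, div_lt_one hδ] at this
    calc |f t x - f t' x|
        = |(f t x - f t (N.point k)) + (f t (N.point k) - f t' (N.point k))
            + (f t' (N.point k) - f t' x)| := by ring_nf
      _ ≤ |f t x - f t (N.point k)| + |f t (N.point k) - f t' (N.point k)|
            + |f t' (N.point k) - f t' x| := abs_add_three _ _ _
      _ ≤ δ + δ + δ := by
        gcongr
        · exact (hlip t _ _).trans hk
        · exact (hlip t' _ _).trans (dist_comm x _ ▸ hk)
      _ ≤ ε := by linarith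
  · simp [Fintype.card_piFinset, Int.card_Icc]

end RootedNet

lemma EuclideanSpace.dist_le_mul_sqrt_card {ι : Type*} [Fintype ι] {x y : EuclideanSpace ℝ ι}
    {c : ℝ} (hc : 0 ≤ c) (h : ∀ i, |x i - y i| ≤ c) : dist x y ≤ c * √(Fintype.card ι) := by
  rw [EuclideanSpace.dist_eq, ← Real.sqrt_sq hc, ← Real.sqrt_mul' _ (Nat.cast_nonneg _), mul_comm,
    ← nsmul_eq_mul, ← Finset.card_univ, ← Finset.sum_const]
  gcongr with i
  exact h i

def towardZero (z : ℤ) : ℤ := z - z.sign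

lemma natAbs_towardZero (z : ℤ) : (towardZero z).natAbs = z.natAbs - 1 := by
  rcases z with (_ | n) | n <;> simp [towardZero, Int.sign, Int.negSucc_eq] <;> omega

lemma abs_sub_towardZero_le_one (z : ℤ) : |z - towardZero z| ≤ 1 := by
  rcases z with (_ | n) | n <;> simp [towardZero, Int.sign]

lemma towardZero_iterate_eq_zero {n : ℕ} {z : ℤ} (h : z.natAbs ≤ n) : towardZero^[n] z = 0 := by
  induction n generalizing z with
  | zero => simpa using h
  | succ n ih =>
    rw [Function.iterate_succ_apply]
    exact ih (by rw [natAbs_towardZero]; omega)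

lemma zero_mem_cube {s : ℕ} {a : ℝ} (ha : 0 ≤ a) : (0 : EuclideanSpace ℝ (Fin s)) ∈ cube s a :=
  fun i => by simpa using ha

lemma norm_le_of_mem_cube {s : ℕ} {a : ℝ} (ha : 0 ≤ a) {x : EuclideanSpace ℝ (Fin s)}
    (hx : x ∈ cube s a) : ‖x‖ ≤ a * √s := by
  have := EuclideanSpace.dist_le_mul_sqrt_card (x := x) (y := 0) ha fun i => by simpa using hx i
  rwa [dist_zero_right, Fintype.card_fin] at this

abbrev CubeGridIndex (s m : ℕ) := Fin s → Finset.Icc (-(m : ℤ)) m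

lemma card_cubeGridIndex (s m : ℕ) : Fintype.card (CubeGridIndex s m) = (2 * m + 1) ^ s := by
  simp only [Fintype.card_fun, Fintype.card_coe, Int.card_Icc, Fintype.card_fin]
  congr 1
  omega

section CubeNet

variable {s : ℕ} {a : ℝ} (ha : 0 ≤ a)

def cubeProj (y : EuclideanSpace ℝ (Fin s)) : cube s a :=
  ⟨WithLp.toLp 2 fun i => (Set.projIcc (-a) a (neg_le_self ha) (y i) : ℝ),
    fun i => abs_le.mpr (Set.projIcc (-a) a (neg_le_self ha) (y i)).2⟩

lemma cubeProj_of_mem (x : cube s a) : cubeProj ha x = x := by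
  ext i
  exact congrArg Subtype.val (Set.projIcc_of_mem (neg_le_self ha) (abs_le.mp (x.2 i)))

lemma dist_cubeProj_le {y z : EuclideanSpace ℝ (Fin s)} {c : ℝ} (hc : 0 ≤ c)
    (h : ∀ i, |y i - z i| ≤ c) : dist (cubeProj ha y) (cubeProj ha z) ≤ c * √s := by
  have := EuclideanSpace.dist_le_mul_sqrt_card (x := (cubeProj ha y : EuclideanSpace ℝ (Fin s)))
    (y := cubeProj ha z) hc fun i => (Set.abs_projIcc_sub_projIcc (neg_le_self ha)).trans (h i)
  rwa [Fintype.card_fin, ← Subtype.dist_eq] at this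

variable (s) {m : ℕ}

def cubeGrid (η : ℝ) (k : CubeGridIndex s m) : cube s a :=
  cubeProj ha (WithLp.toLp 2 fun i => ((k i : ℤ) : ℝ) * η)

def cubeGridParent (k : CubeGridIndex s m) : CubeGridIndex s m :=
  fun i => ⟨towardZero (k i), by
    have := Finset.mem_Icc.mp (k i).2
    have := natAbs_towardZero (k i)
    exact Finset.mem_Icc.mpr (by omega)⟩

lemma coe_cubeGridParent_iterate (n : ℕ) (k : CubeGridIndex s m) (i : Fin s) :
    ((cubeGridParent s)^[n] k i : ℤ) = towardZero^[n] (k i) := by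
  induction n with
  | zero => rfl
  | succ n ih => rw [Function.iterate_succ_apply', Function.iterate_succ_apply', ← ih]; rfl

def cubeNet {η : ℝ} (hη : 0 < η) (hm : a ≤ m * η) :
    RootedNet (cube s a) (CubeGridIndex s m) (η * √s) where
  point := cubeGrid s ha η
  parent := cubeGridParent s
  root _ := ⟨0, by simp⟩
  exists_iterate_parent_eq_root k := ⟨m, funext fun i => Subtype.ext <| by
    rw [coe_cubeGridParent_iterate]
    exact towardZero_iterate_eq_zero (by have := Finset.mem_Icc.mp (k i).2; omega)⟩
  dist_parent_le k := dist_cubeProj_le ha hη.le fun i => by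
    simp only [cubeGridParent, ← sub_mul, abs_mul, abs_of_pos hη]
    exact mul_le_of_le_one_left hη.le (mod_cast abs_sub_towardZero_le_one _)
  exists_dist_le x := by
    have hbound : ∀ i, |x.1 i / η| ≤ m := fun i => by
      rw [abs_div, abs_of_pos hη, div_le_iff₀ hη]
      exact (x.2 i).trans hm
    refine ⟨fun i => ⟨⌊x.1 i / η⌋, Finset.mem_Icc.mpr ⟨?_, ?_⟩⟩, ?_⟩
    · exact Int.le_floor.mpr (by push_cast; linarith [(abs_le.mp (hbound i)).1])
    · exact Int.floor_le_iff.mpr (by push_cast; linarith [(abs_le.mp (hbound i)).2])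
    · conv_lhs => arg 1; rw [← cubeProj_of_mem ha x]
      refine dist_cubeProj_le ha hη.le fun i => ?_
      rw [PiLp.toLp_apply, abs_of_nonneg (Int.sub_floor_div_mul_nonneg _ hη)]
      exact (Int.sub_floor_div_mul_lt _ hη).le

lemma cubeNet_point_root {η : ℝ} (hη : 0 < η) (hm : a ≤ m * η) :
    (cubeNet s ha hη hm).point (cubeNet s ha hη hm).root = ⟨0, zero_mem_cube ha⟩ := by
  have : (WithLp.toLp 2 fun _ : Fin s => ((0 : ℤ) : ℝ) * η) = 0 := by ext; simp
  simp only [cubeNet, cubeGrid, this]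
  exact cubeProj_of_mem ha ⟨0, zero_mem_cube ha⟩

end CubeNet

lemma three_pow_le_exp {s : ℕ} (hs : s ≠ 0) {t : ℝ} (ht : 1 ≤ t) :
    (3 : ℝ) ^ (2 * ⌈3 * t⌉₊ + 1) ^ s ≤ Real.exp ((18 * t) ^ s) := by
  set N := (2 * ⌈3 * t⌉₊ + 1) ^ s
  have hN : (N : ℝ) ≤ (9 * t) ^ s := by
    have := Nat.ceil_lt_add_one (by positivity : 0 ≤ 3 * t)
    simp only [N]
    push_cast
    exact pow_le_pow_left₀ (by positivity) (by linarith) s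
  calc (3 : ℝ) ^ N ≤ Real.exp 2 ^ N :=
        pow_le_pow_left₀ (by norm_num) (by linarith [Real.add_one_le_exp 2]) N
    _ = Real.exp (N * 2) := (Real.exp_nat_mul 2 N).symm
    _ ≤ Real.exp ((9 * t) ^ s * 2 ^ s) := by
        gcongr
        exact le_self_pow₀ (by norm_num) hs
    _ = Real.exp ((18 * t) ^ s) := by rw [← mul_pow]; ring_nf

abbrev LipschitzVanishingAtZero (s : ℕ) (a : ℝ) :=
  {h : cube s a → ℝ // LipschitzWith 1 h ∧
    ∀ h0 : (0 : EuclideanSpace ℝ (Fin s)) ∈ cube s a, h ⟨0, h0⟩ = 0}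

section LipschitzVanishingAtZero

variable {s : ℕ} {a ε : ℝ}

lemma coverN_lipschitzVanishingAtZero_le_one (ha : 0 ≤ a) (hε : a * √s ≤ ε) :
    coverN (fun h₁ h₂ : LipschitzVanishingAtZero s a => ⨆ x, |h₁.1 x - h₂.1 x|) ε ≤ 1 := by
  have h0 := zero_mem_cube (s := s) ha
  have : Nonempty (cube s a) := ⟨⟨0, h0⟩⟩
  refine coverN_le_one ⟨fun _ => 0, LipschitzWith.const' 0, fun _ => rfl⟩ fun h =>
    ciSup_le fun x => ?_
  calc |h.1 x - 0| = |h.1 x - h.1 ⟨0, h0⟩| := by rw [h.2.2 h0]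
    _ ≤ dist x ⟨0, h0⟩ := by simpa [Real.dist_eq] using h.2.1.dist_le_mul x ⟨0, h0⟩
    _ = ‖x.1‖ := by rw [Subtype.dist_eq, dist_zero_right]
    _ ≤ ε := (norm_le_of_mem_cube ha x.2).trans hε

lemma coverN_lipschitzVanishingAtZero_le_three_pow (hs : s ≠ 0) (ha : 0 < a) (hε : 0 < ε) :
    coverN (fun h₁ h₂ : LipschitzVanishingAtZero s a => ⨆ x, |h₁.1 x - h₂.1 x|) ε ≤
      3 ^ (2 * ⌈3 * (a * √s / ε)⌉₊ + 1) ^ s := by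
  have hsqrt : 0 < √s := Real.sqrt_pos.mpr (by positivity)
  have hη : 0 < ε / (3 * √s) := by positivity
  have hm : a ≤ ⌈3 * (a * √s / ε)⌉₊ * (ε / (3 * √s)) :=
    calc a = 3 * (a * √s / ε) * (ε / (3 * √s)) := by field_simp
      _ ≤ ⌈3 * (a * √s / ε)⌉₊ * (ε / (3 * √s)) := by gcongr; exact Nat.le_ceil _
  have hδ : 3 * (ε / (3 * √s) * √s) ≤ ε := le_of_eq (by field_simp)
  have key := (cubeNet s ha.le hη hm).coverN_lipschitz_le (by positivity)
    (fun h : LipschitzVanishingAtZero s a => h.1)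
    (fun h => h.2.1) (fun h => by rw [cubeNet_point_root]; exact h.2.2 _) hδ
  rwa [card_cubeGridIndex] at key

end LipschitzVanishingAtZero

/-- Covering numbers, in the supremum norm, of the set of 1-Lipschitz functions vanishing at
the origin on the cube `[-a,a]^s` (Lemma 2.3 of the paper). -/
theorem covering_lipschitz_cube :
    ∃ C : ℝ, 1 ≤ C ∧
      ∀ (s : ℕ) (a : ℝ), 0 < a → ∀ ε : ℝ, 0 < ε →
        coverN
          (fun h₁ h₂ : {h : cube s a → ℝ //
              LipschitzWith 1 h ∧
                ∀ h0 : (0 : EuclideanSpace ℝ (Fin s)) ∈ cube s a, h ⟨0, h0⟩ = 0} =>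
            ⨆ x : cube s a, |h₁.1 x - h₂.1 x|) ε
          ≤ ENNReal.ofReal (Real.exp ((C * a * Real.sqrt s / ε) ^ s)) := by
  refine ⟨18, by norm_num, fun s a ha ε hε => ?_⟩
  rcases le_or_gt (a * √s) ε with hsmall | hlarge
  · exact (coverN_lipschitzVanishingAtZero_le_one ha.le hsmall).trans
      (ENNReal.one_le_ofReal.mpr (Real.one_le_exp (by positivity)))
  · have hs : s ≠ 0 := by rintro rfl; simp at hlarge; linarith
    refine (coverN_lipschitzVanishingAtZero_le_three_pow hs ha hε).trans ?_
    rw [← ENNReal.ofReal_ofNat, ← ENNReal.ofReal_pow (by norm_num),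
      show 18 * a * √s / ε = 18 * (a * √s / ε) by ring]
    exact ENNReal.ofReal_le_ofReal (three_pow_le_exp hs ((one_le_div hε).mpr hlarge.le))

end
end
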